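/- arXiv:1902.09228 — 9 statements merged into one kernel-verified Lean document; each statement's English description precedes it below -/
import Mathlib

section
/- There exists a constant C > 0 such that for all sufficiently large n there is a family of simple graphs on n vertices that are pairwise non-isomorphic, each of which is an interval graph, and whose cardinality is at least 2^(n·log₂ n − 2n·log₂ log₂ n − C·n). Equivalently, the number I_n of unlabeled (isomorphism classes of) interval graphs on n vertices satisfies log₂ I_n ≥ n·log₂ n − 2n·log₂ log₂ n − O(n). -/
/-!
Place points at `0, …, m - 1` with `m ≈ n / log₂ n`, and let each of the remaining `n - m`
vertices choose an interval with endpoints among these points. The adjacencies between points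
and intervals recover the choices, so this gives at least `(m² / 2) ^ (n - m)` distinct labelled
interval graphs on `Fin n`. An isomorphism class contains at most `n! ≤ 2 ^ (n log₂ n)` of them,
while `(m² / 2) ^ (n - m) ≥ 2 ^ (2 n log₂ n - 2 n log₂ log₂ n - O(n))`.
-/

/-- A simple graph on `Fin n` is an interval graph if it has a realization by
closed real intervals: adjacency of distinct vertices is equivalent to the
corresponding intervals intersecting. -/
def IsIntervalGraph {n : ℕ} (G : SimpleGraph (Fin n)) : Prop :=
  ∃ l r : Fin n → ℝ, (∀ v, l v ≤ r v) ∧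
    ∀ u v : Fin n, u ≠ v →
      (G.Adj u v ↔ (Set.Icc (l u) (r u) ∩ Set.Icc (l v) (r v)).Nonempty)

open Finset Real

namespace SimpleGraph

variable {V : Type*}

def isoSetoid (V : Type*) : Setoid (SimpleGraph V) where
  r G H := Nonempty (G ≃g H)
  iseqv := ⟨fun _ => ⟨.refl⟩, fun ⟨e⟩ => ⟨e.symm⟩, fun ⟨e⟩ ⟨f⟩ => ⟨f.comp e⟩⟩

lemma Iso.eq_comap {G H : SimpleGraph V} (φ : H ≃g G) : H = G.comap φ := by
  ext u v
  exact φ.map_adj_iff.symm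

open Classical in
lemma card_filter_iso_le_factorial [Fintype V] (T : Finset (SimpleGraph V))
    (G : SimpleGraph V) :
    #{H ∈ T | Nonempty (H ≃g G)} ≤ (Fintype.card V).factorial := by
  calc #{H ∈ T | Nonempty (H ≃g G)}
      ≤ #((univ : Finset (Equiv.Perm V)).image fun e : Equiv.Perm V => G.comap e) := by
        refine card_le_card fun H hH => ?_
        obtain ⟨-, ⟨φ⟩⟩ := mem_filter.1 hH
        exact mem_image.2 ⟨φ.toEquiv, mem_univ _, φ.eq_comap.symm⟩
    _ ≤ (Fintype.card V).factorial := card_image_le.trans_eq Fintype.card_perm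

lemma exists_subset_pairwise_isEmpty_iso [Fintype V] (T : Finset (SimpleGraph V)) :
    ∃ S ⊆ T, (∀ G ∈ S, ∀ H ∈ S, G ≠ H → IsEmpty (G ≃g H)) ∧
      #T ≤ (Fintype.card V).factorial * #S := by
  classical
  let cls : SimpleGraph V → Quotient (isoSetoid V) := Quotient.mk _
  obtain ⟨S, hST, hinj, himage⟩ :=
    exists_subset_injOn_image_eq_of_surjOn (f := cls) T (T.image cls) (by simp [Set.SurjOn])
  refine ⟨S, by exact_mod_cast hST, fun G hG H hH hne => ?_, ?_⟩
  · exact not_nonempty_iff.1 fun hGH => hne (hinj hG hH (Quotient.sound hGH))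
  · rw [← card_image_of_injOn hinj, himage]
    refine card_le_mul_card_image T _ fun c _ => ?_
    induction c using Quotient.inductionOn with | h G => ?_
    convert card_filter_iso_le_factorial T G using 3
    exact Quotient.eq

end SimpleGraph

section IntervalGraph

variable {V α : Type*}

def intervalGraph [Preorder α] (l r : V → α) : SimpleGraph V where
  Adj u v := u ≠ v ∧ (Set.Icc (l u) (r u) ∩ Set.Icc (l v) (r v)).Nonempty
  symm := ⟨fun _ _ h => ⟨h.1.symm, by rw [Set.inter_comm]; exact h.2⟩⟩
  loopless := ⟨fun _ h => h.1 rfl⟩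

lemma intervalGraph_adj [Preorder α] {l r : V → α} {u v : V} :
    (intervalGraph l r).Adj u v ↔ u ≠ v ∧ (Set.Icc (l u) (r u) ∩ Set.Icc (l v) (r v)).Nonempty :=
  Iff.rfl

lemma isIntervalGraph_intervalGraph {n : ℕ} {l r : Fin n → ℝ} (h : ∀ v, l v ≤ r v) :
    IsIntervalGraph (intervalGraph l r) :=
  ⟨l, r, h, fun _ _ huv => and_iff_right huv⟩

lemma card_mul_card_le_two_mul_card_le [LinearOrder α] [Fintype α] :
    Fintype.card α * Fintype.card α ≤ 2 * Fintype.card {p : α × α // p.1 ≤ p.2} := by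
  let orient : {p : α × α // p.1 ≤ p.2} ⊕ {p : α × α // p.1 ≤ p.2} → α × α :=
    Sum.elim Subtype.val fun p => p.1.swap
  have horient : Function.Surjective orient := by
    rintro ⟨a, b⟩
    rcases le_total a b with h | h
    · exact ⟨.inl ⟨(a, b), h⟩, rfl⟩
    · exact ⟨.inr ⟨(b, a), h⟩, rfl⟩
  simpa [Fintype.card_sum, two_mul] using Fintype.card_le_of_surjective _ horient

end IntervalGraph

section PointsAndIntervals

variable {m k : ℕ}

/-- Vertex `castAdd k i` is the point `i`, vertex `natAdd m j` the interval `g j`. -/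
def pointsIntervalsGraph (g : Fin k → {p : Fin m × Fin m // p.1 ≤ p.2}) :
    SimpleGraph (Fin (m + k)) :=
  intervalGraph (Fin.append (fun i => (i : ℝ)) fun j => ((g j).1.1 : ℝ))
    (Fin.append (fun i => (i : ℝ)) fun j => ((g j).1.2 : ℝ))

lemma isIntervalGraph_pointsIntervalsGraph (g : Fin k → {p : Fin m × Fin m // p.1 ≤ p.2}) :
    IsIntervalGraph (pointsIntervalsGraph g) := by
  refine isIntervalGraph_intervalGraph fun v => ?_
  induction v using Fin.addCases with
  | left i => simp
  | right j => simpa using (g j).2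

lemma pointsIntervalsGraph_adj_castAdd_natAdd (g : Fin k → {p : Fin m × Fin m // p.1 ≤ p.2})
    (i : Fin m) (j : Fin k) :
    (pointsIntervalsGraph g).Adj (Fin.castAdd k i) (Fin.natAdd m j) ↔
      i ∈ Set.Icc (g j).1.1 (g j).1.2 := by
  rw [pointsIntervalsGraph, intervalGraph_adj, Fin.append_left, Fin.append_left,
    Fin.append_right, Fin.append_right, Set.Icc_self, Set.singleton_inter_nonempty]
  have hne : Fin.castAdd k i ≠ Fin.natAdd m j := Fin.ne_of_val_ne (by simp; omega)
  simp only [Set.mem_Icc, Nat.cast_le, Fin.val_fin_le, ne_eq, hne, not_false_eq_true, true_and]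

lemma pointsIntervalsGraph_injective :
    Function.Injective (pointsIntervalsGraph (m := m) (k := k)) := by
  intro g g' hgg'
  funext j
  have hIcc : Set.Icc (g j).1.1 (g j).1.2 = Set.Icc (g' j).1.1 (g' j).1.2 := by
    ext i
    rw [← pointsIntervalsGraph_adj_castAdd_natAdd, ← pointsIntervalsGraph_adj_castAdd_natAdd, hgg']
  exact Subtype.ext (Prod.ext_iff.2 ((Set.Icc_eq_Icc_iff (g j).2).1 hIcc))


lemma exists_finset_isIntervalGraph_mul_self_pow_le {n : ℕ} (hmn : m ≤ n) :
    ∃ T : Finset (SimpleGraph (Fin n)), (∀ G ∈ T, IsIntervalGraph G) ∧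
      (m * m) ^ (n - m) ≤ 2 ^ (n - m) * #T := by
  classical
  obtain ⟨k, rfl⟩ := Nat.exists_eq_add_of_le hmn
  refine ⟨univ.image pointsIntervalsGraph, ?_, ?_⟩
  · simp only [mem_image, mem_univ, true_and, forall_exists_index, forall_apply_eq_imp_iff]
    exact isIntervalGraph_pointsIntervalsGraph
  · rw [card_image_of_injective _ pointsIntervalsGraph_injective, card_univ, Fintype.card_fun,
      Fintype.card_fin, Nat.add_sub_cancel_left, ← mul_pow]
    exact Nat.pow_le_pow_left (by simpa using card_mul_card_le_two_mul_card_le (α := Fin m)) k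

end PointsAndIntervals

lemma factorial_le_two_rpow_mul_logb {n : ℕ} (hn : 0 < n) :
    (n.factorial : ℝ) ≤ 2 ^ (n * logb 2 n) :=
  calc (n.factorial : ℝ) ≤ (n : ℝ) ^ n := by exact_mod_cast Nat.factorial_le_pow n
    _ = (2 ^ logb 2 n) ^ n := by rw [rpow_logb two_pos (by norm_num) (by positivity)]
    _ = 2 ^ (n * logb 2 n) := by rw [mul_comm, rpow_mul_natCast zero_le_two]

/-- `m = ⌊n / log₂ n⌋` points admit about `(n / log₂ n)² / 2` intervals, and the remaining
`n - m ≥ n - n / log₂ n` vertices choose among them independently. -/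
lemma exists_two_rpow_le_half_mul_self_pow {n : ℕ} (hn : 2 ≤ n) (hlog : 2 * logb 2 n ≤ n) :
    ∃ m ≤ n, (2 : ℝ) ^ (2 * n * logb 2 n - 2 * n * logb 2 (logb 2 n) - 5 * n) ≤
      ((m : ℝ) * m / 2) ^ (n - m) := by
  set L := logb 2 n with hL
  set m := ⌊n / L⌋₊
  have hn0 : (0 : ℝ) < n := by positivity
  have hL1 : 1 ≤ L := by
    rw [hL, le_logb_iff_rpow_le one_lt_two hn0, rpow_one]
    exact_mod_cast hn
  have hL0 : 0 < L := by linarith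
  have hx2 : 2 ≤ n / L := by rw [le_div_iff₀ hL0]; linarith
  have hm_le : (m : ℝ) ≤ n / L := Nat.floor_le (by positivity)
  have hm_ge : n / L / 2 ≤ m := by linarith [Nat.lt_floor_add_one (n / L)]
  have hmL : m * L ≤ n := (le_div_iff₀ hL0).1 hm_le
  have hmn : m ≤ n := by
    have : (m : ℝ) ≤ n := by nlinarith
    exact_mod_cast this
  set X := (L - logb 2 L) * 2 - 3 with hX
  have hXL : X ≤ 2 * L := by linarith [logb_nonneg one_lt_two hL1]
  have hpowX : (2 : ℝ) ^ X = (n / L) ^ 2 / 8 := by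
    rw [hX, rpow_sub two_pos, rpow_mul zero_le_two, rpow_sub two_pos,
      rpow_logb two_pos (by norm_num) hn0, rpow_logb two_pos (by norm_num) hL0, rpow_two]
    norm_num
  refine ⟨m, hmn, ?_⟩
  calc (2 : ℝ) ^ (2 * n * L - 2 * n * logb 2 L - 5 * n)
      ≤ 2 ^ (X * (n - m : ℕ)) := by
        gcongr
        · norm_num
        · rw [Nat.cast_sub hmn]
          nlinarith
    _ = ((n / L) ^ 2 / 8) ^ (n - m) := by rw [rpow_mul_natCast zero_le_two, hpowX]
    _ ≤ ((m : ℝ) * m / 2) ^ (n - m) := by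
        refine pow_le_pow_left₀ (by positivity) ?_ _
        nlinarith [mul_self_le_mul_self (by positivity) hm_ge]

lemma eventually_two_mul_logb_le : ∀ᶠ n : ℕ in Filter.atTop, 2 * logb 2 n ≤ n := by
  have h := (isLittleO_logb_id_atTop (b := 2)).bound (show (0 : ℝ) < 1 / 2 by norm_num)
  filter_upwards [tendsto_natCast_atTop_atTop.eventually h] with n hn
  rw [norm_eq_abs, norm_eq_abs, id, abs_of_nonneg (Nat.cast_nonneg (α := ℝ) n)] at hn
  linarith [le_abs_self (logb 2 n)]

lemma exists_pairwise_isEmpty_iso_isIntervalGraph {m n : ℕ} (hmn : m ≤ n) :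
    ∃ S : Finset (SimpleGraph (Fin n)), (∀ G ∈ S, IsIntervalGraph G) ∧
      (∀ G ∈ S, ∀ H ∈ S, G ≠ H → IsEmpty (G ≃g H)) ∧
      (m * m) ^ (n - m) ≤ 2 ^ (n - m) * (n.factorial * #S) := by
  obtain ⟨T, hT, hcardT⟩ := exists_finset_isIntervalGraph_mul_self_pow_le hmn
  obtain ⟨S, hST, hS, hcardS⟩ := SimpleGraph.exists_subset_pairwise_isEmpty_iso T
  refine ⟨S, fun G hG => hT G (hST hG), hS, hcardT.trans ?_⟩
  simpa using hcardS

/-- There is a constant `C > 0` such that for all sufficiently large `n` there is a family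
of pairwise non-isomorphic interval graphs on `n` vertices of cardinality at least
`2 ^ (n·log₂ n − 2n·log₂ log₂ n − C·n)`, i.e. `log₂ I_n ≥ n log₂ n − 2n log₂ log₂ n − O(n)`. -/
theorem interval_graph_count_lower_bound :
    ∃ C : ℝ, C > 0 ∧ ∀ᶠ n : ℕ in Filter.atTop,
      ∃ S : Finset (SimpleGraph (Fin n)),
        (∀ G ∈ S, IsIntervalGraph G) ∧
        (∀ G ∈ S, ∀ H ∈ S, G ≠ H → IsEmpty (G ≃g H)) ∧
        (2 : ℝ) ^ ((n : ℝ) * Real.logb 2 n - 2 * n * Real.logb 2 (Real.logb 2 n) - C * n)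
          ≤ (S.card : ℝ) := by
  refine ⟨5, by norm_num, ?_⟩
  filter_upwards [eventually_two_mul_logb_le, Filter.eventually_ge_atTop 2] with n hlog hn
  obtain ⟨m, hmn, hm⟩ := exists_two_rpow_le_half_mul_self_pow hn hlog
  obtain ⟨S, hS, hiso, hcard⟩ := exists_pairwise_isEmpty_iso_isIntervalGraph hmn
  refine ⟨S, hS, hiso, ?_⟩
  have hcard' : ((m : ℝ) * m / 2) ^ (n - m) ≤ n.factorial * #S := by
    rw [div_pow, div_le_iff₀ (by positivity)]
    exact_mod_cast hcard.trans_eq (mul_comm _ _)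
  have hfact := factorial_le_two_rpow_mul_logb (n := n) (by omega)
  refine le_of_mul_le_mul_left ?_ (rpow_pos_of_pos two_pos ((n : ℝ) * logb 2 n))
  calc (2 : ℝ) ^ (n * logb 2 n) * 2 ^ (n * logb 2 n - 2 * n * logb 2 (logb 2 n) - 5 * n)
      = 2 ^ (2 * n * logb 2 n - 2 * n * logb 2 (logb 2 n) - 5 * n) := by
        rw [← rpow_add two_pos]; congr 1; ring
    _ ≤ n.factorial * #S := hm.trans hcard'
    _ ≤ 2 ^ (n * logb 2 n) * #S := by gcongr
end

section
/- Fix an integer k ≥ 1, a real ε with 0 < ε < 1/2, and an integer m ≥ 1. For 1 ≤ j ≤ k let B_j = [−j−ε, −j+ε] (blue) and R_j = [j−ε, j+ε] (red), and for a pair (a,b) with 1 ≤ a, b ≤ k let W(a,b) = [−a, b] (white). Let J, J' be two sets of m pairs from {1,…,k} × {1,…,k}, and let G_J (respectively G_{J'}) be the intersection graph on the 2k + m intervals consisting of all B_j, all R_j, and the white intervals W(a,b) for (a,b) ∈ J (respectively J'). If there exists a graph isomorphism from G_J to G_{J'} that maps every vertex corresponding to a blue interval to a vertex corresponding to a blue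 interval, every red vertex to a red vertex, and every white vertex to a white vertex, then J = J'. -/
/-- The colored family of intervals: `Sum.inl j` is the blue interval
`B_{j+1} = [−(j+1)−ε, −(j+1)+ε]`, `Sum.inr (Sum.inl j)` is the red interval
`R_{j+1} = [(j+1)−ε, (j+1)+ε]`, and `Sum.inr (Sum.inr p)` for a pair `p = (a, b) ∈ J`
is the white interval `W = [−(a+1), b+1]`. -/
def coloredInterval {k : ℕ} (ε : ℝ) (J : Finset (Fin k × Fin k)) :
    (Fin k ⊕ (Fin k ⊕ {p : Fin k × Fin k // p ∈ J})) → Set ℝ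
  | Sum.inl j => Set.Icc (-((j : ℕ) + 1 : ℝ) - ε) (-((j : ℕ) + 1 : ℝ) + ε)
  | Sum.inr (Sum.inl j) => Set.Icc (((j : ℕ) + 1 : ℝ) - ε) (((j : ℕ) + 1 : ℝ) + ε)
  | Sum.inr (Sum.inr p) => Set.Icc (-((p.val.1 : ℕ) + 1 : ℝ)) (((p.val.2 : ℕ) + 1 : ℝ))

/-- The intersection graph `G_J` of the colored family of intervals: distinct vertices are
adjacent iff their intervals intersect. -/
def coloredIntersectionGraph {k : ℕ} (ε : ℝ) (J : Finset (Fin k × Fin k)) :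
    SimpleGraph (Fin k ⊕ (Fin k ⊕ {p : Fin k × Fin k // p ∈ J})) :=
  SimpleGraph.fromRel (fun u v => (coloredInterval ε J u ∩ coloredInterval ε J v).Nonempty)

lemma blue_white_adj {k : ℕ} {ε : ℝ} (hε : 0 < ε) (hε' : ε < 1/2)
    (J : Finset (Fin k × Fin k)) (j : Fin k) (p : {p : Fin k × Fin k // p ∈ J}) :
    (coloredIntersectionGraph ε J).Adj (Sum.inl j) (Sum.inr (Sum.inr p)) ↔
      (j : ℕ) ≤ (p.val.1 : ℕ) := by
  have hne : (Sum.inl j : Fin k ⊕ (Fin k ⊕ {p : Fin k × Fin k // p ∈ J})) ≠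
      Sum.inr (Sum.inr p) := by simp
  rw [coloredIntersectionGraph, SimpleGraph.fromRel_adj]
  rw [Set.inter_comm (coloredInterval ε J (Sum.inr (Sum.inr p)))]
  simp only [hne, or_self, true_and, ne_eq, not_false_eq_true]
  show (Set.Icc (-((j : ℕ) + 1 : ℝ) - ε) (-((j : ℕ) + 1 : ℝ) + ε) ∩
      Set.Icc (-((p.val.1 : ℕ) + 1 : ℝ)) (((p.val.2 : ℕ) + 1 : ℝ))).Nonempty ↔ _
  rw [Set.Icc_inter_Icc, Set.nonempty_Icc, max_le_iff, le_min_iff, le_min_iff]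
  have h0j : (0:ℝ) ≤ (j:ℕ) := Nat.cast_nonneg _
  have h0a : (0:ℝ) ≤ (p.val.1:ℕ) := Nat.cast_nonneg _
  have h0b : (0:ℝ) ≤ (p.val.2:ℕ) := Nat.cast_nonneg _
  constructor
  · rintro ⟨-, ⟨h, -⟩⟩
    by_contra hc
    push_neg at hc
    have : ((p.val.1:ℕ):ℝ) + 1 ≤ ((j:ℕ):ℝ) := by exact_mod_cast hc
    linarith
  · intro h
    have : ((j:ℕ):ℝ) ≤ ((p.val.1:ℕ):ℝ) := by exact_mod_cast h
    refine ⟨⟨by linarith, by linarith⟩, by linarith, by linarith⟩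

lemma red_white_adj {k : ℕ} {ε : ℝ} (hε : 0 < ε) (hε' : ε < 1/2)
    (J : Finset (Fin k × Fin k)) (j : Fin k) (p : {p : Fin k × Fin k // p ∈ J}) :
    (coloredIntersectionGraph ε J).Adj (Sum.inr (Sum.inl j)) (Sum.inr (Sum.inr p)) ↔
      (j : ℕ) ≤ (p.val.2 : ℕ) := by
  have hne : (Sum.inr (Sum.inl j) : Fin k ⊕ (Fin k ⊕ {p : Fin k × Fin k // p ∈ J})) ≠
      Sum.inr (Sum.inr p) := by simp
  rw [coloredIntersectionGraph, SimpleGraph.fromRel_adj]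
  rw [Set.inter_comm (coloredInterval ε J (Sum.inr (Sum.inr p)))]
  simp only [hne, or_self, true_and, ne_eq, not_false_eq_true]
  show (Set.Icc (((j : ℕ) + 1 : ℝ) - ε) (((j : ℕ) + 1 : ℝ) + ε) ∩
      Set.Icc (-((p.val.1 : ℕ) + 1 : ℝ)) (((p.val.2 : ℕ) + 1 : ℝ))).Nonempty ↔ _
  rw [Set.Icc_inter_Icc, Set.nonempty_Icc, max_le_iff, le_min_iff, le_min_iff]
  have h0j : (0:ℝ) ≤ (j:ℕ) := Nat.cast_nonneg _
  have h0a : (0:ℝ) ≤ (p.val.1:ℕ) := Nat.cast_nonneg _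
  have h0b : (0:ℝ) ≤ (p.val.2:ℕ) := Nat.cast_nonneg _
  constructor
  · rintro ⟨⟨-, h⟩, -⟩
    by_contra hc
    push_neg at hc
    have : ((p.val.2:ℕ):ℝ) + 1 ≤ ((j:ℕ):ℝ) := by exact_mod_cast hc
    linarith
  · intro h
    have : ((j:ℕ):ℝ) ≤ ((p.val.2:ℕ):ℝ) := by exact_mod_cast h
    refine ⟨⟨by linarith, by linarith⟩, by linarith, by linarith⟩

/-- If an injective map of `Fin k` translates `Iic a` to `Iic a'` then `a = a'`. -/
lemma eq_of_iic_iff {k : ℕ} (σ : Fin k → Fin k) (hinj : Function.Injective σ)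
    (a a' : Fin k) (h : ∀ j : Fin k, (j:ℕ) ≤ (a:ℕ) ↔ ((σ j : Fin k):ℕ) ≤ (a':ℕ)) :
    a = a' := by
  have hbij : Function.Bijective σ := (Finite.injective_iff_bijective).mp hinj
  have him : (Finset.Iic a).image σ = Finset.Iic a' := by
    ext x
    simp only [Finset.mem_image, Finset.mem_Iic]
    constructor
    · rintro ⟨j, hj, rfl⟩
      exact Fin.le_def.mpr ((h j).mp (Fin.le_def.mp hj))
    · intro hx
      obtain ⟨j, rfl⟩ := hbij.surjective x
      exact ⟨j, Fin.le_def.mpr ((h j).mpr (Fin.le_def.mp hx)), rfl⟩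
  have := congrArg Finset.card him
  rw [Finset.card_image_of_injective _ hinj, Fin.card_Iic, Fin.card_Iic] at this
  exact Fin.ext (Nat.succ_injective this)

/-- If a color-preserving isomorphism exists between the colored intersection graphs `G_J`
and `G_{J'}` (blue vertices to blue, red to red, white to white), then `J = J'`. -/
theorem color_preserving_iso_implies_equal (k m : ℕ) (hk : 1 ≤ k) (hm : 1 ≤ m)
    (ε : ℝ) (hε : 0 < ε) (hε' : ε < 1 / 2)
    (J J' : Finset (Fin k × Fin k)) (hJ : J.card = m) (hJ' : J'.card = m)
    (φ : coloredIntersectionGraph ε J ≃g coloredIntersectionGraph ε J')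
    (hblue : ∀ j : Fin k, ∃ j' : Fin k, φ (Sum.inl j) = Sum.inl j')
    (hred : ∀ j : Fin k, ∃ j' : Fin k, φ (Sum.inr (Sum.inl j)) = Sum.inr (Sum.inl j'))
    (hwhite : ∀ p : {p : Fin k × Fin k // p ∈ J}, ∃ p' : {p : Fin k × Fin k // p ∈ J'},
      φ (Sum.inr (Sum.inr p)) = Sum.inr (Sum.inr p')) :
    J = J' := by
  choose σ hσ using hblue
  choose ρ hρ using hred
  choose w hw using hwhite
  have hσinj : Function.Injective σ := by
    intro i j hij
    have : φ (Sum.inl i) = φ (Sum.inl j) := by rw [hσ i, hσ j, hij]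
    exact Sum.inl_injective (φ.injective this)
  have hρinj : Function.Injective ρ := by
    intro i j hij
    have : φ (Sum.inr (Sum.inl i)) = φ (Sum.inr (Sum.inl j)) := by rw [hρ i, hρ j, hij]
    exact Sum.inl_injective (Sum.inr_injective (φ.injective this))
  have hsub : J ⊆ J' := by
    intro p hp
    have key : (w ⟨p, hp⟩).val = p := by
      have h1 : ∀ j : Fin k, (j:ℕ) ≤ (p.1:ℕ) ↔ ((σ j : Fin k):ℕ) ≤ ((w ⟨p, hp⟩).val.1:ℕ) := by
        intro j
        rw [← blue_white_adj hε hε' J j ⟨p, hp⟩,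
          ← blue_white_adj hε hε' J' (σ j) (w ⟨p, hp⟩),
          ← hσ j, ← hw ⟨p, hp⟩, φ.map_adj_iff]
      have h2 : ∀ j : Fin k, (j:ℕ) ≤ (p.2:ℕ) ↔ ((ρ j : Fin k):ℕ) ≤ ((w ⟨p, hp⟩).val.2:ℕ) := by
        intro j
        rw [← red_white_adj hε hε' J j ⟨p, hp⟩,
          ← red_white_adj hε hε' J' (ρ j) (w ⟨p, hp⟩),
          ← hρ j, ← hw ⟨p, hp⟩, φ.map_adj_iff]
      have e1 := eq_of_iic_iff σ hσinj p.1 (w ⟨p, hp⟩).val.1 h1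
      have e2 := eq_of_iic_iff ρ hρinj p.2 (w ⟨p, hp⟩).val.2 h2
      exact Prod.ext e1.symm e2.symm
    rw [← key]
    exact (w ⟨p, hp⟩).property
  exact Finset.eq_of_subset_of_card_le hsub (by rw [hJ, hJ'])
end

section
/- Let G be a connected simple graph on Fin n (n ≥ 2) with an interval realization l, r : Fin n → ℝ such that all 2n endpoint values are pairwise distinct and l is strictly increasing. Then every vertex v other than the first vertex has a neighbor u with u < v. -/
/-- If a connected graph `G` on `Fin n` (`n ≥ 2`) has an interval realization with pairwise
distinct endpoints, labeled in left-endpoint order, then every vertex other than the first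
has a neighbor with a smaller label. -/
theorem interval_graph_earlier_neighbor (n : ℕ) (hn : 2 ≤ n) (G : SimpleGraph (Fin n))
    (hconn : G.Connected) (l r : Fin n → ℝ)
    (hlr : ∀ v, l v ≤ r v)
    (hadj : ∀ u v : Fin n, u ≠ v →
      (G.Adj u v ↔ (Set.Icc (l u) (r u) ∩ Set.Icc (l v) (r v)).Nonempty))
    (hdistinct : Function.Injective (Sum.elim l r : Fin n ⊕ Fin n → ℝ))
    (hmono : StrictMono l)
    (v : Fin n) (hv : v ≠ ⟨0, by omega⟩) :
    ∃ u : Fin n, u < v ∧ G.Adj u v := by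
  by_contra h
  push_neg at h
  have key : ∀ u : Fin n, u < v → r u < l v := by
    intro u hu
    by_contra hru
    push_neg at hru
    exact h u hu ((hadj u v (ne_of_lt hu)).mpr
      ⟨l v, ⟨le_of_lt (hmono hu), hru⟩, le_refl _, hlr v⟩)
  have step : ∀ x y : Fin n, G.Adj x y → x < v → y < v := by
    intro x y hxy hx
    rcases lt_trichotomy y v with h1 | h1 | h1
    · exact h1
    · subst h1; exact absurd hxy (h x hx)
    · exfalso
      obtain ⟨t, ⟨_, htx2⟩, hty1, _⟩ := (hadj x y hxy.ne).mp hxy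
      have h2 : l v < l y := hmono h1
      have h3 : r x < l v := key x hx
      linarith
  have claim : ∀ a b : Fin n, G.Walk a b → a < v → b < v := by
    intro a b w
    induction w with
    | nil => exact id
    | cons he _ ih => intro ha; exact ih (step _ _ he ha)
  have h0 : (⟨0, by omega⟩ : Fin n) < v := by
    have : v.val ≠ 0 := fun hc => hv (Fin.ext hc)
    exact Fin.lt_def.mpr (Nat.pos_of_ne_zero this)
  exact absurd (claim _ _ (hconn ⟨0, by omega⟩ v).some h0) (lt_irrefl v)
end

section
/- Let G be a connected simple graph on Fin n with an interval realization l, r : Fin n → ℝ such that all 2n endpoint values are pairwise distinct and l is strictly increasing, and let 0 denote the first vertex. Then the graph distance from 0 is monotone in the labels: for all vertices u ≤ v, dist(0, u) ≤ dist(0, v). (In particular, the increasing label order is a valid BFS ordering of G started at vertex 0.) -/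
/-- If a connected graph `G` on `Fin n` has an interval realization with pairwise distinct
endpoints, labeled in left-endpoint order, then the graph distance from the first vertex is
monotone in the labels (so increasing label order is a valid BFS order from vertex `0`). -/
theorem interval_graph_bfs_order (n : ℕ) (hn : 0 < n) (G : SimpleGraph (Fin n))
    (hconn : G.Connected) (l r : Fin n → ℝ)
    (hlr : ∀ v, l v ≤ r v)
    (hadj : ∀ u v : Fin n, u ≠ v →
      (G.Adj u v ↔ (Set.Icc (l u) (r u) ∩ Set.Icc (l v) (r v)).Nonempty))
    (hdistinct : Function.Injective (Sum.elim l r : Fin n ⊕ Fin n → ℝ))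
    (hmono : StrictMono l)
    (u v : Fin n) (huv : u ≤ v) :
    G.dist ⟨0, hn⟩ u ≤ G.dist ⟨0, hn⟩ v := by
  set z : Fin n := ⟨0, hn⟩ with hz
  -- key interval graph property: a < b < c and a ~ c implies a ~ b
  have between : ∀ a b c : Fin n, a < b → b < c → G.Adj a c → G.Adj a b := by
    intro a b c hab hbc hac
    rw [hadj a c (hab.trans hbc).ne] at hac
    obtain ⟨x, ⟨hx1, hx2⟩, hx3, hx4⟩ := hac
    rw [hadj a b hab.ne]
    exact ⟨l b, ⟨(hmono hab).le, ((hmono hbc).le.trans hx3).trans hx2⟩,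
      le_refl _, hlr b⟩
  obtain ⟨p, hp⟩ := (hconn z v).exists_walk_length_eq_dist
  have key : ∀ i, G.dist z (p.getVert i) ≤ i := by
    intro i
    induction i with
    | zero => simp [p.getVert_zero]
    | succ i ih =>
      by_cases h : i < p.length
      · have ha := p.adj_getVert_succ h
        calc G.dist z (p.getVert (i+1))
            ≤ G.dist z (p.getVert i) + G.dist (p.getVert i) (p.getVert (i+1)) :=
              hconn.dist_triangle
          _ ≤ i + 1 := by
              have h1 : G.dist (p.getVert i) (p.getVert (i+1)) ≤ 1 := by
                have := SimpleGraph.dist_le (ha.toWalk)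
                simpa using this
              omega
      · have he : p.getVert (i+1) = p.getVert i := by
          rw [p.getVert_of_length_le (by omega), p.getVert_of_length_le (by omega)]
        rw [he]; omega
  have hzle : z ≤ u := by simp [hz, Fin.le_def]
  classical
  set k := Nat.findGreatest (fun i => p.getVert i ≤ u) p.length with hk
  have hk0 : p.getVert k ≤ u :=
    Nat.findGreatest_spec (P := fun i => p.getVert i ≤ u) (Nat.zero_le _) (by simpa [p.getVert_zero] using hzle)
  have hkle : k ≤ p.length := Nat.findGreatest_le _
  rcases eq_or_lt_of_le hk0 with heq | hlt
  · calc G.dist z u = G.dist z (p.getVert k) := by rw [heq]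
      _ ≤ k := key k
      _ ≤ p.length := hkle
      _ = G.dist z v := hp
  · -- p.getVert k < u, so k < p.length
    have hklt : k < p.length := by
      rcases eq_or_lt_of_le hkle with he | h
      · exfalso
        rw [he, p.getVert_length] at hlt
        exact absurd huv (not_le.mpr hlt)
      · exact h
    have hnext : ¬ (p.getVert (k+1) ≤ u) := by
      have := Nat.findGreatest_is_greatest (n := p.length)
        (P := fun i => p.getVert i ≤ u) (k := k+1) (by omega) (by omega)
      exact this
    have hult : u < p.getVert (k+1) := lt_of_not_ge hnext
    have hadj' : G.Adj (p.getVert k) u :=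
      between _ _ _ hlt hult (p.adj_getVert_succ hklt)
    calc G.dist z u ≤ G.dist z (p.getVert k) + G.dist (p.getVert k) u :=
          hconn.dist_triangle
      _ ≤ k + 1 := by
          have h1 : G.dist (p.getVert k) u ≤ 1 := by
            have := SimpleGraph.dist_le (hadj'.toWalk)
            simpa using this
          have := key k
          omega
      _ ≤ p.length := hklt
      _ = G.dist z v := hp
end

section
/- Let G be a simple graph on Fin n with an interval realization l, r : Fin n → ℝ in which all 2n endpoint values are pairwise distinct. Then for every vertex v, the degree of v in G equals |{u : l u < r v}| − |{u : r u < l v}| − 1. -/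
/-- If `G` on `Fin n` has an interval realization with pairwise distinct endpoints, then the
degree of a vertex `v` equals `|{u : l u < r v}| − |{u : r u < l v}| − 1`. -/
theorem interval_graph_degree (n : ℕ) (G : SimpleGraph (Fin n)) (l r : Fin n → ℝ)
    (hlr : ∀ v, l v ≤ r v)
    (hadj : ∀ u v : Fin n, u ≠ v →
      (G.Adj u v ↔ (Set.Icc (l u) (r u) ∩ Set.Icc (l v) (r v)).Nonempty))
    (hdistinct : Function.Injective (Sum.elim l r : Fin n ⊕ Fin n → ℝ))
    (v : Fin n) :
    (G.neighborSet v).ncard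
      = {u : Fin n | l u < r v}.ncard - {u : Fin n | r u < l v}.ncard - 1 := by
  classical
  have hlne : ∀ a b : Fin n, l a ≠ r b := by
    intro a b h
    have := hdistinct (a₁ := Sum.inl a) (a₂ := Sum.inr b) (by simpa using h)
    simp at this
  have hlvrv : l v < r v := lt_of_le_of_ne (hlr v) (hlne v v)
  set A := {u : Fin n | l u < r v} with hA
  set B := {u : Fin n | r u < l v} with hB
  have hBA : B ⊆ A := by
    intro u hu
    exact lt_trans (lt_of_le_of_lt (hlr u) hu) hlvrv
  have hvAB : v ∈ A \ B := ⟨hlvrv, by simp [hB]; exact le_of_lt hlvrv⟩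
  have hset : G.neighborSet v = (A \ B) \ {v} := by
    ext u
    simp only [SimpleGraph.mem_neighborSet, Set.mem_diff, Set.mem_singleton_iff,
      hA, hB, Set.mem_setOf_eq]
    constructor
    · intro hadju
      have hne : u ≠ v := hadju.ne'
      have h := (hadj v u hne.symm).mp hadju
      rw [Set.Icc_inter_Icc, Set.nonempty_Icc, sup_le_iff, le_inf_iff, le_inf_iff] at h
      refine ⟨⟨lt_of_le_of_ne h.2.1 (hlne u v), ?_⟩, hne⟩
      exact not_lt.mpr h.1.2
    · rintro ⟨⟨h1, h2⟩, hne⟩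
      refine (hadj v u (Ne.symm hne)).mpr ?_
      rw [Set.Icc_inter_Icc, Set.nonempty_Icc, sup_le_iff, le_inf_iff, le_inf_iff]
      exact ⟨⟨hlr v, not_lt.mp h2⟩, le_of_lt h1, hlr u⟩
  rw [hset, Set.ncard_diff_singleton_of_mem hvAB, Set.ncard_diff hBA]
end

section
/- Let G be a connected simple graph on a finite vertex set with an interval realization l, r, and let u, v be vertices with r u < l v (so u and v are not adjacent). Let w be a neighbor of u maximizing the right endpoint r w among all neighbors of u. Then dist(u, v) = dist(w, v) + 1, where dist denotes graph distance in G. -/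
lemma aux_length_drop {V : Type*} {G : SimpleGraph V} {u v : V} (p : G.Walk u v) (n : ℕ) :
    (p.drop n).length = p.length - n := by
  induction p generalizing n with
  | nil => simp [SimpleGraph.Walk.drop]
  | cons h q ih =>
    cases n with
    | zero => simp [SimpleGraph.Walk.drop]
    | succ n => simp [SimpleGraph.Walk.drop, ih, Nat.succ_sub_succ]

/-- In a connected interval graph, for non-adjacent `u, v` with `r u < l v`, a neighbor `w`
of `u` maximizing the right endpoint satisfies `dist(u, v) = dist(w, v) + 1`. -/
theorem interval_graph_succ_shortest_path (V : Type*) [Fintype V]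
    (G : SimpleGraph V) (hconn : G.Connected) (l r : V → ℝ)
    (hlr : ∀ v, l v ≤ r v)
    (hadj : ∀ u v : V, u ≠ v →
      (G.Adj u v ↔ (Set.Icc (l u) (r u) ∩ Set.Icc (l v) (r v)).Nonempty))
    (u v w : V) (huv : r u < l v)
    (hw : G.Adj u w) (hwmax : ∀ x : V, G.Adj u x → r x ≤ r w) :
    G.dist u v = G.dist w v + 1 := by
  classical
  have key : ∀ a b : V, G.Adj a b → l b ≤ r a := by
    intro a b hab
    obtain ⟨q, hq1, hq2⟩ := (hadj a b hab.ne).mp hab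
    exact le_trans hq2.1 hq1.2
  have hne : u ≠ v := by
    rintro rfl; exact absurd huv (not_lt.2 (hlr u))
  have hnadj : ¬ G.Adj u v := by
    intro h
    obtain ⟨q, hq1, hq2⟩ := (hadj u v hne).mp h
    exact absurd (le_trans hq2.1 hq1.2) (not_le.2 huv)
  have hk0 : G.dist u v ≠ 0 := by
    have := hconn.pos_dist_of_ne hne; omega
  have hk1 : G.dist u v ≠ 1 := fun h => hnadj (SimpleGraph.dist_eq_one_iff_adj.mp h)
  have hk2 : 2 ≤ G.dist u v := by omega
  have hlwru : l w ≤ r u := key u w hw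
  -- upper bound
  have hub : G.dist u v ≤ G.dist w v + 1 := by
    have := hconn.dist_triangle (u := u) (v := w) (w := v)
    have h1 : G.dist u w = 1 := SimpleGraph.dist_eq_one_iff_adj.mpr hw
    omega
  -- lower bound
  have hlb : G.dist w v + 1 ≤ G.dist u v := by
    by_cases hcase : l v ≤ r w
    · -- w = v or w adjacent to v
      by_cases hwv : w = v
      · subst hwv; simp [SimpleGraph.dist_self]; omega
      · have hadjwv : G.Adj w v := (hadj w v hwv).mpr
          ⟨l v, ⟨le_of_lt (lt_of_le_of_lt hlwru huv), hcase⟩, ⟨le_refl _, hlr v⟩⟩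
        have : G.dist w v = 1 := SimpleGraph.dist_eq_one_iff_adj.mpr hadjwv
        omega
    · push_neg at hcase
      obtain ⟨p, hp⟩ := hconn.exists_walk_length_eq_dist u v
      set k := G.dist u v with hk
      have hplen : p.length = k := hp
      -- j = greatest index ≤ k with l (p.getVert j) ≤ r w
      set P : ℕ → Prop := fun i => l (p.getVert i) ≤ r w with hP
      have hP2 : P 2 := by
        have h01 : G.Adj (p.getVert 0) (p.getVert 1) :=
          p.adj_getVert_succ (by omega)
        have h12 : G.Adj (p.getVert 1) (p.getVert 2) :=
          p.adj_getVert_succ (by omega)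
        have hx1 : G.Adj u (p.getVert 1) := by rwa [p.getVert_zero] at h01
        exact le_trans (key _ _ h12) (hwmax _ hx1)
      set j := Nat.findGreatest P k with hj
      have hjspec : P j := Nat.findGreatest_spec (m := 2) hk2 hP2
      have hj2 : 2 ≤ j := Nat.le_findGreatest hk2 hP2
      have hjk : j ≤ k := Nat.findGreatest_le k
      have hjltk : j < k := by
        rcases lt_or_eq_of_le hjk with h | h
        · exact h
        · exfalso
          have : p.getVert k = v := by rw [← hplen]; exact p.getVert_length
          rw [hP] at hjspec
          rw [h, this] at hjspec
          exact absurd hjspec (not_le.2 hcase)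
      have hnotj1 : ¬ P (j + 1) :=
        Nat.findGreatest_is_greatest (P := P) (n := k) (k := j + 1) (by omega) (by omega)
      have hadjj : G.Adj (p.getVert j) (p.getVert (j + 1)) :=
        p.adj_getVert_succ (by omega)
      have hrxj : r w < r (p.getVert j) := by
        have := key _ _ hadjj
        rw [hP] at hnotj1; push_neg at hnotj1
        linarith
      have hdistjv : G.dist (p.getVert j) v ≤ k - j := by
        have := G.dist_le (p.drop j)
        rwa [aux_length_drop, hplen] at this
      by_cases hwj : w = p.getVert j
      · rw [hwj]; omega
      · have hadjwj : G.Adj w (p.getVert j) := (hadj w _ hwj).mpr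
          ⟨r w, ⟨hlr w, le_refl _⟩, ⟨hjspec, le_of_lt hrxj⟩⟩
        have h1 : G.dist w (p.getVert j) = 1 := SimpleGraph.dist_eq_one_iff_adj.mpr hadjwj
        have htri := hconn.dist_triangle (u := w) (v := p.getVert j) (w := v)
        omega
  omega
end

section
/- Let G be a simple graph on a finite nonempty vertex set with an interval realization l, r, and let v be a vertex whose right endpoint r v is minimal among all vertices. Then there exists an independent set of G of maximum cardinality that contains v. -/
/-!
The intervals of the neighbours of `v` all contain the point `r v`, so the closed neighbourhood
`N[v]` of `v` is a clique. A maximum independent set therefore meets `N[v]` in at most one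
vertex, and exchanging that vertex for `v` gives a maximum independent set through `v`.
-/

namespace SimpleGraph

variable {α : Type*} {G : SimpleGraph α}

theorem IsIndepSet.ncard_inter_le_one {t c : Set α} (ht : G.IsIndepSet t) (hc : G.IsClique c) :
    (t ∩ c).ncard ≤ 1 := by
  have hsub : (t ∩ c).Subsingleton := fun x hx y hy => by
    by_contra hxy
    exact ht hx.1 hy.1 hxy (hc hx.2 hy.2 hxy)
  exact (Set.ncard_le_one_iff hsub.finite).mpr fun ha hb => hsub ha hb

theorem isClique_insert_neighborSet {v : α} (h : G.IsClique (G.neighborSet v)) :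
    G.IsClique (insert v (G.neighborSet v)) :=
  h.insert fun _ hb _ => hb

theorem IsIndepSet.insert_diff_closedNeighborhood {t : Set α} (ht : G.IsIndepSet t) (v : α) :
    G.IsIndepSet (insert v (t \ insert v (G.neighborSet v))) :=
  (ht.mono Set.sdiff_subset).insert fun b hb _ =>
    have hvb : ¬G.Adj v b := fun h => hb.2 (Or.inr h)
    ⟨hvb, fun h => hvb h.symm⟩

theorem IsIndepSet.ncard_le_ncard_insert_diff_closedNeighborhood [Finite α] {t : Set α}
    (ht : G.IsIndepSet t) {v : α} (h : G.IsClique (G.neighborSet v)) :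
    t.ncard ≤ (insert v (t \ insert v (G.neighborSet v))).ncard := by
  have hv : v ∉ t \ insert v (G.neighborSet v) := fun hv => hv.2 (Set.mem_insert v _)
  calc t.ncard
      = (t ∩ insert v (G.neighborSet v)).ncard + (t \ insert v (G.neighborSet v)).ncard :=
        (Set.ncard_inter_add_ncard_sdiff_eq_ncard _ _).symm
    _ ≤ 1 + (t \ insert v (G.neighborSet v)).ncard := by
        gcongr
        exact ht.ncard_inter_le_one (isClique_insert_neighborSet h)
    _ = (insert v (t \ insert v (G.neighborSet v))).ncard := by
        rw [Set.ncard_insert_of_notMem hv, add_comm]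

theorem exists_maximum_indepSet_mem_of_isClique_neighborSet [Finite α] {v : α}
    (h : G.IsClique (G.neighborSet v)) :
    ∃ s : Set α, v ∈ s ∧ G.IsIndepSet s ∧ ∀ t : Set α, G.IsIndepSet t → t.ncard ≤ s.ncard := by
  obtain ⟨s₀, hs₀⟩ := G.maximumIndepSet_exists
  refine ⟨_, Set.mem_insert v _, hs₀.isIndepSet.insert_diff_closedNeighborhood v, fun t ht => ?_⟩
  have ht' : G.IsIndepSet ↑(Set.toFinite t).toFinset := by rwa [Set.Finite.coe_toFinset]
  calc t.ncard = (Set.toFinite t).toFinset.card := Set.ncard_eq_toFinset_card t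
    _ ≤ s₀.card := hs₀.maximum _ ht'
    _ = (s₀ : Set α).ncard := (Set.ncard_coe_finset s₀).symm
    _ ≤ _ := hs₀.isIndepSet.ncard_le_ncard_insert_diff_closedNeighborhood h

theorem isClique_neighborSet_of_forall_right_le {l r : α → ℝ}
    (hadj : ∀ u v : α, u ≠ v →
      (G.Adj u v ↔ (Set.Icc (l u) (r u) ∩ Set.Icc (l v) (r v)).Nonempty))
    {v : α} (hv : ∀ u : α, r v ≤ r u) :
    G.IsClique (G.neighborSet v) := by
  have hmem : ∀ u ∈ G.neighborSet v, r v ∈ Set.Icc (l u) (r u) := fun u hu => by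
    obtain ⟨x, hxv, hxu⟩ := (hadj v u hu.ne).mp hu
    exact ⟨hxu.1.trans hxv.2, hv u⟩
  exact fun a ha b hb hab => (hadj a b hab).mpr ⟨r v, hmem a ha, hmem b hb⟩

end SimpleGraph

theorem interval_graph_greedy_mis_general (V : Type*) [Fintype V]
    (G : SimpleGraph V) (l r : V → ℝ)
    (hadj : ∀ u v : V, u ≠ v →
      (G.Adj u v ↔ (Set.Icc (l u) (r u) ∩ Set.Icc (l v) (r v)).Nonempty))
    (v : V) (hv : ∀ u : V, r v ≤ r u) :
    ∃ s : Set V, v ∈ s ∧ (∀ a ∈ s, ∀ b ∈ s, a ≠ b → ¬ G.Adj a b) ∧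
      ∀ t : Set V, (∀ a ∈ t, ∀ b ∈ t, a ≠ b → ¬ G.Adj a b) → t.ncard ≤ s.ncard :=
  G.exists_maximum_indepSet_mem_of_isClique_neighborSet
    (G.isClique_neighborSet_of_forall_right_le hadj hv)

/-- In an interval graph on a finite nonempty vertex set, if `v` has minimal right endpoint,
then some maximum-cardinality independent set contains `v`. -/
theorem interval_graph_greedy_mis (V : Type*) [Fintype V] [Nonempty V]
    (G : SimpleGraph V) (l r : V → ℝ)
    (hlr : ∀ v, l v ≤ r v)
    (hadj : ∀ u v : V, u ≠ v →
      (G.Adj u v ↔ (Set.Icc (l u) (r u) ∩ Set.Icc (l v) (r v)).Nonempty))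
    (v : V) (hv : ∀ u : V, r v ≤ r u) :
    ∃ s : Set V, v ∈ s ∧ (∀ a ∈ s, ∀ b ∈ s, a ≠ b → ¬ G.Adj a b) ∧
      ∀ t : Set V, (∀ a ∈ t, ∀ b ∈ t, a ≠ b → ¬ G.Adj a b) → t.ncard ≤ s.ncard :=
  interval_graph_greedy_mis_general V G l r hadj v hv
end

section
/- Let G be a simple graph on a finite vertex set that is an interval graph. Then the chromatic number of G equals the clique number of G. (Consequently, the greedy coloring of an interval graph in increasing order of left endpoints uses an optimal number of colors.) -/
/-- Greedy coloring of vertices `Fin n` with adjacency `A`, processing in order. -/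
noncomputable def greedyCol {n : ℕ} (A : Fin n → Fin n → Prop) : Fin n → ℕ
  | i => sInf {c : ℕ | ∀ j : Fin n, j < i → A j i → greedyCol A j ≠ c}
  termination_by i => i.val
  decreasing_by exact ‹_ < i›

open Finset in
lemma greedyCol_spec {n : ℕ} (A : Fin n → Fin n → Prop) (i : Fin n)
    [DecidablePred fun j : Fin n => j < i ∧ A j i] :
    (∀ j : Fin n, j < i → A j i → greedyCol A j ≠ greedyCol A i) ∧
    greedyCol A i ≤ (Finset.univ.filter fun j : Fin n => j < i ∧ A j i).card := by
  set N : Finset (Fin n) := Finset.univ.filter (fun j : Fin n => j < i ∧ A j i) with hN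
  set F : Finset ℕ := N.image (greedyCol A) with hF
  have hsub : {c : ℕ | c ∉ F} ⊆ {c : ℕ | ∀ j : Fin n, j < i → A j i → greedyCol A j ≠ c} := by
    intro c hc j hj hA hEq
    exact hc (Finset.mem_image.mpr ⟨j, by simp [hN, hj, hA], hEq⟩)
  have hFcard : #F ≤ #N := Finset.card_image_le
  have hex : ∃ c ∈ Finset.range (#N + 1), c ∉ F := by
    by_contra hcon
    push_neg at hcon
    have := Finset.card_le_card (fun c hc => hcon c hc)
    simp at this
    omega
  obtain ⟨c, hcr, hcF⟩ := hex
  have hne : {c : ℕ | ∀ j : Fin n, j < i → A j i → greedyCol A j ≠ c}.Nonempty :=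
    ⟨c, hsub hcF⟩
  constructor
  · have : greedyCol A i ∈ {c : ℕ | ∀ j : Fin n, j < i → A j i → greedyCol A j ≠ c} := by
      rw [greedyCol]
      exact Nat.sInf_mem hne
    exact this
  · rw [greedyCol]
    have : sInf {c : ℕ | ∀ j : Fin n, j < i → A j i → greedyCol A j ≠ c} ≤ c :=
      Nat.sInf_le (hsub hcF)
    have hcle : c ≤ #N := by simpa using Nat.lt_succ_iff.mp (Finset.mem_range.mp hcr)
    omega

/-- An interval graph on a finite vertex set is perfect in the sense that its chromatic
number equals its clique number. -/
theorem interval_graph_chromatic_eq_clique (V : Type*) [Fintype V]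
    (G : SimpleGraph V)
    (h : ∃ l r : V → ℝ, (∀ v, l v ≤ r v) ∧
      ∀ u v : V, u ≠ v →
        (G.Adj u v ↔ (Set.Icc (l u) (r u) ∩ Set.Icc (l v) (r v)).Nonempty)) :
    G.chromaticNumber = (sSup {k : ℕ | ∃ s : Finset V, G.IsNClique k s} : ℕ) := by
  classical
  obtain ⟨l, r, hlr, hadj⟩ := h
  set K : ℕ := sSup {k : ℕ | ∃ s : Finset V, G.IsNClique k s} with hK
  have hKclique : K = G.cliqueNum := rfl
  -- enumeration of vertices sorted by left endpoint
  set n : ℕ := Fintype.card V with hn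
  set f : Fin n ≃ V := (Fintype.equivFin V).symm with hf
  set σ : Equiv.Perm (Fin n) := Tuple.sort (l ∘ f) with hσ
  set e : Fin n ≃ V := σ.trans f with he
  have hmono : Monotone (l ∘ e) := Tuple.monotone_sort (l ∘ f)
  set A : Fin n → Fin n → Prop := fun j i => G.Adj (e j) (e i) with hA
  set N : Fin n → Finset (Fin n) := fun i =>
    Finset.univ.filter (fun j : Fin n => j < i ∧ A j i) with hNdef
  -- key bound: the earlier neighbors of i, together with i, form a clique
  have hbound : ∀ i : Fin n, (N i).card + 1 ≤ K := by
    intro i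
    set s : Finset V := insert (e i) ((N i).image e) with hs
    have hpt : ∀ u ∈ s, l (e i) ∈ Set.Icc (l u) (r u) := by
      intro u hu
      rcases Finset.mem_insert.mp hu with rfl | hu
      · exact ⟨le_refl _, hlr _⟩
      · obtain ⟨j, hj, rfl⟩ := Finset.mem_image.mp hu
        have hj' : j < i ∧ A j i := by simpa [hNdef] using hj
        have hle : l (e j) ≤ l (e i) := hmono hj'.1.le
        have hne : e j ≠ e i := fun hEq => absurd (e.injective hEq) (Fin.ne_of_lt hj'.1)
        obtain ⟨x, hx1, hx2⟩ := (hadj (e j) (e i) hne).mp hj'.2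
        exact ⟨hle, le_trans hx2.1 hx1.2⟩
    have hclique : G.IsClique s := by
      intro u hu v hv huv
      exact (hadj u v huv).mpr ⟨l (e i), hpt u hu, hpt v hv⟩
    have hnotmem : e i ∉ (N i).image e := by
      intro hmem
      obtain ⟨j, hj, hEq⟩ := Finset.mem_image.mp hmem
      have hj' : j < i ∧ A j i := by simpa [hNdef] using hj
      exact absurd (e.injective hEq) (Fin.ne_of_lt hj'.1)
    have hcard : s.card = (N i).card + 1 := by
      rw [hs, Finset.card_insert_of_notMem hnotmem,
        Finset.card_image_of_injective _ e.injective]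
    calc (N i).card + 1 = s.card := hcard.symm
      _ ≤ G.cliqueNum := hclique.card_le_cliqueNum
      _ = K := hKclique.symm
  -- the greedy coloring uses at most K colors
  have hcol : ∀ i : Fin n, greedyCol A i < K := by
    intro i
    have := (greedyCol_spec A i).2
    have := hbound i
    simp [hNdef] at *
    omega
  have hproper : ∀ u v : V, G.Adj u v →
      greedyCol A (e.symm u) ≠ greedyCol A (e.symm v) := by
    have key : ∀ i j : Fin n, i < j → G.Adj (e i) (e j) →
        greedyCol A i ≠ greedyCol A j := by
      intro i j hij hadj'
      exact (greedyCol_spec A j).1 i hij hadj'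
    intro u v huv
    have hne : e.symm u ≠ e.symm v := fun hEq =>
      G.ne_of_adj huv (by simpa using congrArg e hEq)
    rcases lt_or_gt_of_ne hne with hlt | hgt
    · exact key _ _ hlt (by simpa using huv)
    · exact fun hEq => key _ _ hgt (by simpa using huv.symm) hEq.symm
  have hcolorable : G.Colorable K := by
    refine ⟨⟨fun v => ⟨greedyCol A (e.symm v), hcol _⟩, ?_⟩⟩
    intro u v huv hEq
    exact hproper u v huv (by simpa [Fin.ext_iff] using hEq)
  refine le_antisymm hcolorable.chromaticNumber_le ?_
  obtain ⟨s, hsK⟩ := G.exists_isNClique_cliqueNum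
  have := hsK.isClique.card_le_chromaticNumber
  rw [hsK.card_eq] at this
  exact_mod_cast this
end

section
/- For every n, any finite set S of simple graphs on the vertex set Fin n such that every graph in S is an interval graph and the graphs in S are pairwise non-isomorphic satisfies |S| ≤ (2n − 1)!! = ∏_{j=1}^{n} (2j − 1). Equivalently, the number I_n of unlabeled interval graphs on n vertices is at most the number of perfect matchings of 2n points. -/
open Finset

open Finset

/-- `M` is a perfect matching (into ordered pairs) of the finite set `s`. -/
def IsM (s : Finset ℕ) (M : Finset (ℕ × ℕ)) : Prop :=
  (∀ p ∈ M, p.1 < p.2 ∧ p.1 ∈ s ∧ p.2 ∈ s) ∧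
  (∀ x ∈ s, ∃ p ∈ M, x = p.1 ∨ x = p.2) ∧
  (∀ p ∈ M, ∀ q ∈ M, p ≠ q → p.1 ≠ q.1 ∧ p.1 ≠ q.2 ∧ p.2 ≠ q.1 ∧ p.2 ≠ q.2)

instance (s : Finset ℕ) (M : Finset (ℕ × ℕ)) : Decidable (IsM s M) := by
  unfold IsM; infer_instance

/-- The finset of all perfect matchings of `s`. -/
def matchingsOf (s : Finset ℕ) : Finset (Finset (ℕ × ℕ)) :=
  (s ×ˢ s).powerset.filter (IsM s)

lemma mem_matchingsOf {s : Finset ℕ} {M : Finset (ℕ × ℕ)} :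
    M ∈ matchingsOf s ↔ IsM s M := by
  simp only [matchingsOf, mem_filter, mem_powerset, and_iff_right_iff_imp]
  intro h p hp
  have := h.1 p hp
  exact mem_product.2 ⟨this.2.1, this.2.2⟩

lemma matchingsOf_card_le : ∀ (k : ℕ) (s : Finset ℕ), s.card = 2 * k →
    (matchingsOf s).card ≤ ∏ j ∈ Finset.Icc 1 k, (2 * j - 1) := by
  intro k
  induction k with
  | zero =>
    intro s hs
    have hs0 : s = ∅ := card_eq_zero.1 (by omega)
    subst hs0
    have : matchingsOf (∅ : Finset ℕ) ⊆ {∅} := by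
      intro M hM
      simp only [matchingsOf, empty_product, Finset.powerset_empty, mem_filter,
        mem_singleton] at hM
      simp [hM.1]
    calc (matchingsOf (∅ : Finset ℕ)).card ≤ ({∅} : Finset (Finset (ℕ × ℕ))).card :=
          card_le_card this
      _ = 1 := rfl
      _ ≤ _ := by simp
  | succ k ih =>
    intro s hs
    have hne : s.Nonempty := card_pos.1 (by omega)
    set m := s.min' hne with hm
    have hms : m ∈ s := s.min'_mem hne
    have hsub : matchingsOf s ⊆ (s.erase m).biUnion
        (fun x => ((matchingsOf ((s.erase m).erase x))).image (insert (m, x))) := by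
      intro M hM
      obtain ⟨h1, h2, h3⟩ := mem_matchingsOf.1 hM
      obtain ⟨p, hpM, hp⟩ := h2 m hms
      have hpm : m = p.1 := by
        rcases hp with h | h
        · exact h
        · exfalso
          have := h1 p hpM
          have := s.min'_le p.1 this.2.1
          omega
      set x := p.2 with hx
      have hmx : m < x := by rw [hpm]; exact (h1 p hpM).1
      have hxs : x ∈ s := (h1 p hpM).2.2
      have hxe : x ∈ s.erase m := mem_erase.2 ⟨by omega, hxs⟩
      have hpval : p = (m, x) := by rw [hpm, hx]
      rw [mem_biUnion]
      refine ⟨x, hxe, ?_⟩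
      rw [mem_image]
      refine ⟨M.erase (m, x), ?_, ?_⟩
      · rw [mem_matchingsOf]
        refine ⟨?_, ?_, ?_⟩
        · intro q hq
          rw [mem_erase] at hq
          obtain ⟨hqne, hqM⟩ := hq
          have h4 := h3 q hqM p hpM (by rw [hpval]; exact hqne)
          obtain ⟨hq1, hq2, hq3⟩ := h1 q hqM
          rw [hpval] at h4
          refine ⟨hq1, mem_erase.2 ⟨h4.2.1, mem_erase.2 ⟨h4.1, hq2⟩⟩,
            mem_erase.2 ⟨h4.2.2.2, mem_erase.2 ⟨h4.2.2.1, hq3⟩⟩⟩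
        · intro y hy
          rw [mem_erase, mem_erase] at hy
          obtain ⟨hy1, hy2, hy3⟩ := hy
          obtain ⟨q, hqM, hq⟩ := h2 y hy3
          refine ⟨q, mem_erase.2 ⟨?_, hqM⟩, hq⟩
          rintro rfl
          rcases hq with h | h
          · exact hy2 h
          · exact hy1 h
        · intro q hq q' hq'
          exact h3 q (mem_of_mem_erase hq) q' (mem_of_mem_erase hq')
      · rw [← hpval]
        exact insert_erase (hpval ▸ hpM)
    have hcard1 : (s.erase m).card = 2 * k + 1 := by
      rw [card_erase_of_mem hms]; omega
    calc (matchingsOf s).card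
        ≤ ((s.erase m).biUnion
            (fun x => ((matchingsOf ((s.erase m).erase x))).image (insert (m, x)))).card :=
          card_le_card hsub
      _ ≤ ∑ x ∈ s.erase m,
            (((matchingsOf ((s.erase m).erase x))).image (insert (m, x))).card :=
          card_biUnion_le
      _ ≤ ∑ x ∈ s.erase m, ∏ j ∈ Finset.Icc 1 k, (2 * j - 1) := by
          refine Finset.sum_le_sum ?_
          intro x hx
          refine le_trans card_image_le ?_
          refine ih _ ?_
          rw [card_erase_of_mem hx, hcard1]
          omega
      _ = (2 * k + 1) * ∏ j ∈ Finset.Icc 1 k, (2 * j - 1) := by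
          rw [Finset.sum_const, hcard1, smul_eq_mul]
      _ = ∏ j ∈ Finset.Icc 1 (k + 1), (2 * j - 1) := by
          rw [Finset.prod_Icc_succ_top (by omega : 1 ≤ k + 1)]
          have h21 : 2 * (k + 1) - 1 = 2 * k + 1 := by omega
          rw [h21, Nat.mul_comm]



lemma exists_ab {n : ℕ} {G : SimpleGraph (Fin n)} (h : IsIntervalGraph G) :
    ∃ a b : Fin n → Fin (2 * n), (∀ v, a v < b v) ∧
      Function.Bijective (Sum.elim a b) ∧
      ∀ u v : Fin n, u ≠ v → (G.Adj u v ↔ a u < b v ∧ a v < b u) := by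
  classical
  obtain ⟨l, r, hlr, hadj⟩ := h
  set K : Fin n ⊕ Fin n → ℝ ×ₗ ℕ :=
    Sum.elim (fun v => toLex (l v, v.val)) (fun v => toLex (r v, n + v.val)) with hK
  have hKinj : Function.Injective K := by
    intro s t hst
    have h2 : (ofLex (K s)).2 = (ofLex (K t)).2 := by rw [hst]
    cases s with
    | inl v => cases t with
      | inl w =>
          simp only [hK, Sum.elim_inl, ofLex_toLex] at h2
          exact congrArg Sum.inl (Fin.ext h2)
      | inr w =>
          simp only [hK, Sum.elim_inl, Sum.elim_inr, ofLex_toLex] at h2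
          exact absurd h2 (by have := v.isLt; omega)
    | inr v => cases t with
      | inl w =>
          simp only [hK, Sum.elim_inl, Sum.elim_inr, ofLex_toLex] at h2
          exact absurd h2 (by have := w.isLt; omega)
      | inr w =>
          simp only [hK, Sum.elim_inr, ofLex_toLex] at h2
          exact congrArg Sum.inr (Fin.ext (by omega))
  set s : Finset (ℝ ×ₗ ℕ) := Finset.image K Finset.univ with hs
  have hscard : s.card = 2 * n := by
    rw [hs, Finset.card_image_of_injective _ hKinj]
    simp [two_mul]
  let f : Fin (2 * n) ≃o s := s.orderIsoOfFin hscard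
  have hmem : ∀ t, K t ∈ s := fun t => Finset.mem_image_of_mem K (Finset.mem_univ t)
  set pos : (Fin n ⊕ Fin n) → Fin (2 * n) := fun t => f.symm ⟨K t, hmem t⟩ with hpos
  have hposlt : ∀ t t', pos t < pos t' ↔ K t < K t' := by
    intro t t'
    rw [hpos]
    simp only []
    rw [f.symm.lt_iff_lt, Subtype.mk_lt_mk]
  have hposbij : Function.Bijective pos := by
    constructor
    · intro t t' h
      have : (⟨K t, hmem t⟩ : s) = ⟨K t', hmem t'⟩ := f.symm.injective h
      exact hKinj (Subtype.mk_eq_mk.1 this)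
    · intro i
      obtain ⟨t, -, ht⟩ := Finset.mem_image.1 (f i).2
      refine ⟨t, ?_⟩
      rw [hpos]
      simp only []
      have : (⟨K t, hmem t⟩ : s) = f i := Subtype.ext ht
      rw [this, OrderIso.symm_apply_apply]
  set a : Fin n → Fin (2 * n) := fun v => pos (Sum.inl v) with ha
  set b : Fin n → Fin (2 * n) := fun v => pos (Sum.inr v) with hb
  have hkey : ∀ u v : Fin n, a u < b v ↔ l u ≤ r v := by
    intro u v
    rw [ha, hb]
    simp only []
    rw [hposlt]
    simp only [hK, Sum.elim_inl, Sum.elim_inr]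
    rw [Prod.Lex.lt_iff]
    simp only [ofLex_toLex]
    constructor
    · rintro (h | ⟨h, _⟩)
      · exact le_of_lt h
      · exact le_of_eq h
    · intro h
      rcases lt_or_eq_of_le h with h' | h'
      · exact Or.inl h'
      · exact Or.inr ⟨h', by have := u.isLt; omega⟩
  refine ⟨a, b, ?_, ?_, ?_⟩
  · intro v; rw [hkey]; exact hlr v
  · have : Sum.elim a b = pos := by funext t; cases t <;> rfl
    rw [this]; exact hposbij
  · intro u v huv
    rw [hadj u v huv, hkey, hkey]
    rw [Set.Icc_inter_Icc, Set.nonempty_Icc, max_le_iff, le_min_iff, le_min_iff]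
    constructor
    · rintro ⟨⟨_, h1⟩, h2, _⟩; exact ⟨h1, h2⟩
    · rintro ⟨h1, h2⟩; exact ⟨⟨hlr u, h1⟩, h2, hlr v⟩

lemma iso_of_code_eq {n : ℕ} {G H : SimpleGraph (Fin n)}
    {a b a' b' : Fin n → Fin (2 * n)}
    (hG : ∀ u v : Fin n, u ≠ v → (G.Adj u v ↔ a u < b v ∧ a v < b u))
    (hH : ∀ u v : Fin n, u ≠ v → (H.Adj u v ↔ a' u < b' v ∧ a' v < b' u))
    (hinj : Function.Injective (Sum.elim a b))
    (hinj' : Function.Injective (Sum.elim a' b'))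
    (hcode : Finset.image (fun v => (a v, b v)) Finset.univ =
             Finset.image (fun v => (a' v, b' v)) Finset.univ) :
    Nonempty (G ≃g H) := by
  classical
  have hex : ∀ v : Fin n, ∃ w : Fin n, a' w = a v ∧ b' w = b v := by
    intro v
    have hv : (a v, b v) ∈ Finset.image (fun v => (a' v, b' v)) Finset.univ := by
      rw [← hcode]; exact Finset.mem_image_of_mem _ (Finset.mem_univ v)
    obtain ⟨w, -, hw⟩ := Finset.mem_image.1 hv
    exact ⟨w, congrArg Prod.fst hw, congrArg Prod.snd hw⟩
  choose σ hσ1 hσ2 using hex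
  have hainj : Function.Injective a := fun u v h => by
    have := hinj (show Sum.elim a b (Sum.inl u) = Sum.elim a b (Sum.inl v) from h)
    exact Sum.inl_injective this
  have hσinj : Function.Injective σ := by
    intro u v h
    apply hainj
    rw [← hσ1 u, ← hσ1 v, h]
  have hσbij : Function.Bijective σ := (Finite.injective_iff_bijective).1 hσinj
  refine ⟨⟨Equiv.ofBijective σ hσbij, ?_⟩⟩
  intro u v
  simp only [Equiv.ofBijective_apply]
  by_cases huv : u = v
  · subst huv
    simp [SimpleGraph.irrefl]
  · rw [hH (σ u) (σ v) (fun h => huv (hσinj h)), hG u v huv, hσ1, hσ1, hσ2, hσ2]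

/-- Any family of pairwise non-isomorphic interval graphs on `n` vertices has cardinality at
most `(2n − 1)!! = ∏_{j=1}^{n} (2j − 1)`, the number of perfect matchings of `2n` points. -/
theorem interval_graph_count_upper_bound (n : ℕ) (S : Finset (SimpleGraph (Fin n)))
    (hint : ∀ G ∈ S, IsIntervalGraph G)
    (hiso : ∀ G ∈ S, ∀ H ∈ S, G ≠ H → IsEmpty (G ≃g H)) :
    S.card ≤ ∏ j ∈ Finset.Icc 1 n, (2 * j - 1) := by
  classical
  have key : ∀ G : SimpleGraph (Fin n), ∃ a b : Fin n → Fin (2 * n),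
      G ∈ S → ((∀ v, a v < b v) ∧ Function.Bijective (Sum.elim a b) ∧
        ∀ u v : Fin n, u ≠ v → (G.Adj u v ↔ a u < b v ∧ a v < b u)) := by
    intro G
    by_cases hG : G ∈ S
    · obtain ⟨a, b, h1, h2, h3⟩ := exists_ab (hint G hG)
      exact ⟨a, b, fun _ => ⟨h1, h2, h3⟩⟩
    · exact ⟨fun v => ⟨v.val, by omega⟩, fun v => ⟨v.val, by omega⟩,
        fun h => absurd h hG⟩
  choose a b hprops using key
  set code : SimpleGraph (Fin n) → Finset (ℕ × ℕ) :=
    fun G => Finset.image (fun v => ((a G v).val, (b G v).val)) Finset.univ with hcode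
  have hmaps : ∀ G ∈ S, code G ∈ matchingsOf (Finset.range (2 * n)) := by
    intro G hG
    obtain ⟨h1, h2, h3⟩ := hprops G hG
    rw [mem_matchingsOf]
    refine ⟨?_, ?_, ?_⟩
    · intro p hp
      obtain ⟨v, -, hv⟩ := Finset.mem_image.1 hp
      subst hv
      exact ⟨h1 v, Finset.mem_range.2 (a G v).isLt, Finset.mem_range.2 (b G v).isLt⟩
    · intro x hx
      obtain ⟨t, ht⟩ := h2.2 ⟨x, Finset.mem_range.1 hx⟩
      cases t with
      | inl v =>
          refine ⟨((a G v).val, (b G v).val),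
            Finset.mem_image_of_mem _ (Finset.mem_univ v), Or.inl ?_⟩
          rw [show Sum.elim (a G) (b G) (Sum.inl v) = a G v from rfl] at ht
          rw [ht]
      | inr v =>
          refine ⟨((a G v).val, (b G v).val),
            Finset.mem_image_of_mem _ (Finset.mem_univ v), Or.inr ?_⟩
          rw [show Sum.elim (a G) (b G) (Sum.inr v) = b G v from rfl] at ht
          rw [ht]
    · intro p hp q hq hpq
      obtain ⟨u, -, hu⟩ := Finset.mem_image.1 hp
      obtain ⟨v, -, hv⟩ := Finset.mem_image.1 hq
      subst hu; subst hv
      have huv : u ≠ v := by rintro rfl; exact hpq rfl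
      have d1 : a G u ≠ a G v := fun h =>
        huv (Sum.inl_injective (h2.1 (show Sum.elim (a G) (b G) (Sum.inl u) =
          Sum.elim (a G) (b G) (Sum.inl v) from h)))
      have d2 : ∀ w w' : Fin n, a G w ≠ b G w' := fun w w' h => by
        have := h2.1 (show Sum.elim (a G) (b G) (Sum.inl w) =
          Sum.elim (a G) (b G) (Sum.inr w') from h)
        exact Sum.inl_ne_inr this
      have d3 : b G u ≠ b G v := fun h =>
        huv (Sum.inr_injective (h2.1 (show Sum.elim (a G) (b G) (Sum.inr u) =
          Sum.elim (a G) (b G) (Sum.inr v) from h)))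
      exact ⟨fun h => d1 (Fin.val_injective h), fun h => d2 u v (Fin.val_injective h),
        fun h => (d2 v u (Fin.val_injective h.symm)), fun h => d3 (Fin.val_injective h)⟩
  have hinjOn : Set.InjOn code S := by
    intro G hG H hH hcodeeq
    by_contra hne
    obtain ⟨h1G, h2G, h3G⟩ := hprops G hG
    obtain ⟨h1H, h2H, h3H⟩ := hprops H hH
    have hpm : Function.Injective (Prod.map (Fin.val : Fin (2*n) → ℕ) (Fin.val : Fin (2*n) → ℕ)) :=
      Fin.val_injective.prodMap Fin.val_injective
    have himg : Finset.image (fun v => (a G v, b G v)) Finset.univ =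
        Finset.image (fun v => (a H v, b H v)) Finset.univ := by
      apply Finset.image_injective hpm
      rw [Finset.image_image, Finset.image_image]
      exact hcodeeq
    have hainjG : Function.Injective (Sum.elim (a G) (b G)) := h2G.1
    have hainjH : Function.Injective (Sum.elim (a H) (b H)) := h2H.1
    obtain ⟨iso⟩ := iso_of_code_eq h3G h3H hainjG hainjH himg
    exact (hiso G hG H hH hne).false iso
  calc S.card ≤ (matchingsOf (Finset.range (2 * n))).card :=
        Finset.card_le_card_of_injOn code hmaps hinjOn
    _ ≤ ∏ j ∈ Finset.Icc 1 n, (2 * j - 1) :=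
        matchingsOf_card_le n _ (Finset.card_range _)
end
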